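/- For 0 < ρ < π/2, the integral ∫₀¹ (π − 2 cos ρ · arctan(√(1−u²)/(u cos ρ)) − 2 arcsin u) du equals 2(sin ρ − ρ cos ρ)/sin ρ. -/

import Mathlib

open Real MeasureTheory Set Filter Topology

/-!
With `s² + c² = 1`, the function `x ↦ x · arctan (√(1 - x²) / (x c)) - arctan (s √(1 - x²) / c) / s`
is an antiderivative of `arctan (√(1 - x²) / (x c))` on `(0, 1)`; it tends to `-arctan (s / c) / s`
at `0` and vanishes at `1`. For `c = cos ρ`, `s = sin ρ` the arctan term therefore integrates to
`ρ / sin ρ`, and together with `∫₀¹ arcsin = π / 2 - 1` this gives the identity.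
-/

theorem hasDerivAt_sqrt_one_sub_sq {x : ℝ} (hx : x ^ 2 < 1) :
    HasDerivAt (fun u => √(1 - u ^ 2)) (-x / √(1 - x ^ 2)) x := by
  have h := ((hasDerivAt_pow 2 x).const_sub 1).sqrt (by linarith)
  convert h using 1
  field_simp
  ring

theorem abs_arctan_lt_pi_div_two (x : ℝ) : |arctan x| < π / 2 :=
  abs_lt.2 ⟨neg_pi_div_two_lt_arctan x, arctan_lt_pi_div_two x⟩

theorem intervalIntegrable_arctan_comp {f : ℝ → ℝ} (hf : AEStronglyMeasurable f) (a b : ℝ) :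
    IntervalIntegrable (fun x => arctan (f x)) volume a b := by
  rw [intervalIntegrable_iff]
  refine IntegrableOn.of_bound measure_Ioc_lt_top
    (continuous_arctan.comp_aestronglyMeasurable hf).restrict (π / 2) (ae_of_all _ fun x => ?_)
  exact (abs_arctan_lt_pi_div_two _).le

theorem tendsto_mul_arctan_nhds_zero {α : Type*} {l : Filter α} {f g : α → ℝ}
    (hf : Tendsto f l (𝓝 0)) : Tendsto (fun u => f u * arctan (g u)) l (𝓝 0) :=
  hf.zero_mul_isBoundedUnder_le (isBoundedUnder_of ⟨π / 2, fun u => by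
    simpa only [Function.comp, norm_eq_abs] using (abs_arctan_lt_pi_div_two _).le⟩)

theorem hasDerivAt_mul_arcsin_add_sqrt {x : ℝ} (hx : x ^ 2 < 1) :
    HasDerivAt (fun u => u * arcsin u + √(1 - u ^ 2)) (arcsin x) x := by
  have hx' : x ∈ Ioo (-1 : ℝ) 1 := by constructor <;> nlinarith
  refine (((hasDerivAt_id' x).mul (hasDerivAt_arcsin hx'.1.ne' hx'.2.ne)).add
    (hasDerivAt_sqrt_one_sub_sq hx)).congr_deriv ?_
  ring

theorem integral_arcsin_zero_one : ∫ u in (0 : ℝ)..1, arcsin u = π / 2 - 1 := by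
  rw [intervalIntegral.integral_eq_sub_of_hasDerivAt_of_le zero_le_one (by fun_prop)
    (fun x hx => hasDerivAt_mul_arcsin_add_sqrt (by nlinarith [hx.1, hx.2]))
    (continuous_arcsin.intervalIntegrable 0 1)]
  norm_num

section
variable {c s : ℝ}

noncomputable def arctanAntideriv (c s x : ℝ) : ℝ :=
  x * arctan (√(1 - x ^ 2) / (x * c)) - arctan (s * √(1 - x ^ 2) / c) / s

/- The rational parts of the derivatives of the two terms both equal
`-x c / (√(1 - x²) (1 - x² s²))`, so they cancel. -/
theorem hasDerivAt_arctanAntideriv (hc : c ≠ 0) (hs : s ≠ 0) (hsc : s ^ 2 + c ^ 2 = 1)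
    {x : ℝ} (hx0 : x ≠ 0) (hx : x ^ 2 < 1) :
    HasDerivAt (arctanAntideriv c s) (arctan (√(1 - x ^ 2) / (x * c))) x := by
  have hsqrt := hasDerivAt_sqrt_one_sub_sq hx
  refine (((hasDerivAt_id' x).mul ((hsqrt.div ((hasDerivAt_id' x).mul_const c)
      (mul_ne_zero hx0 hc)).arctan)).sub
    (((hsqrt.const_mul s).div_const c).arctan.div_const s)).congr_deriv ?_
  have ht : 0 < √(1 - x ^ 2) := sqrt_pos.2 (by linarith)
  have ht2 : √(1 - x ^ 2) ^ 2 = 1 - x ^ 2 := sq_sqrt (by linarith)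
  simp only [Pi.div_apply]
  generalize √(1 - x ^ 2) = t at ht ht2
  have hq : 0 < 1 - x ^ 2 * s ^ 2 := by nlinarith
  have h1 : 1 + (t / (x * c)) ^ 2 = (1 - x ^ 2 * s ^ 2) / (x * c) ^ 2 := by
    field_simp
    linear_combination ht2 + x ^ 2 * hsc
  have h2 : 1 + (s * t / c) ^ 2 = (1 - x ^ 2 * s ^ 2) / c ^ 2 := by
    field_simp
    linear_combination s ^ 2 * ht2 + hsc
  rw [h1, h2]
  field_simp [hq.ne']
  linear_combination (-(x * c)) * ht2

theorem tendsto_arctanAntideriv_nhds_zero :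
    Tendsto (arctanAntideriv c s) (𝓝 0) (𝓝 (-(arctan (s / c) / s))) := by
  have hlin : Tendsto (fun x : ℝ => x * arctan (√(1 - x ^ 2) / (x * c))) (𝓝 0) (𝓝 0) :=
    tendsto_mul_arctan_nhds_zero tendsto_id
  have hcont : Continuous fun x : ℝ => arctan (s * √(1 - x ^ 2) / c) / s := by fun_prop
  unfold arctanAntideriv
  simpa using hlin.sub (hcont.tendsto 0)

theorem continuousAt_arctanAntideriv_one (hc : c ≠ 0) : ContinuousAt (arctanAntideriv c s) 1 := by
  unfold arctanAntideriv
  fun_prop (disch := simpa using hc)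

theorem integral_arctan_sqrt_one_sub_sq_div (hc : c ≠ 0) (hs : s ≠ 0) (hsc : s ^ 2 + c ^ 2 = 1) :
    ∫ u in (0 : ℝ)..1, arctan (√(1 - u ^ 2) / (u * c)) = arctan (s / c) / s := by
  have h := intervalIntegral.integral_eq_sub_of_hasDerivAt_of_tendsto zero_lt_one
    (fun x hx => hasDerivAt_arctanAntideriv hc hs hsc hx.1.ne' (by nlinarith [hx.1, hx.2]))
    (intervalIntegrable_arctan_comp (Measurable.aestronglyMeasurable (by fun_prop)) 0 1)
    (tendsto_arctanAntideriv_nhds_zero.mono_left nhdsWithin_le_nhds)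
    ((continuousAt_arctanAntideriv_one hc).tendsto.mono_left nhdsWithin_le_nhds)
  rw [h]
  simp [arctanAntideriv]

end

/-- For 0 < ρ < π/2,
`∫₀¹ (π − 2 cos ρ · arctan(√(1−u²)/(u cos ρ)) − 2 arcsin u) du = 2(sin ρ − ρ cos ρ)/sin ρ`. -/
theorem integral_identity (ρ : ℝ) (h0 : 0 < ρ) (h1 : ρ < π / 2) :
    ∫ u in (0:ℝ)..1,
        (π - 2 * Real.cos ρ * Real.arctan (Real.sqrt (1 - u ^ 2) / (u * Real.cos ρ))
          - 2 * Real.arcsin u)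
      = 2 * (Real.sin ρ - ρ * Real.cos ρ) / Real.sin ρ := by
  have hc : 0 < cos ρ := cos_pos_of_mem_Ioo ⟨by linarith [pi_pos], h1⟩
  have hs : 0 < sin ρ := sin_pos_of_pos_of_lt_pi h0 (by linarith [pi_pos])
  have hA := integral_arctan_sqrt_one_sub_sq_div hc.ne' hs.ne' (sin_sq_add_cos_sq ρ)
  rw [← tan_eq_sin_div_cos, arctan_tan (by linarith) h1] at hA
  have hA_int : IntervalIntegrable (fun u => 2 * cos ρ * arctan (√(1 - u ^ 2) / (u * cos ρ)))
      volume 0 1 :=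
    (intervalIntegrable_arctan_comp (Measurable.aestronglyMeasurable (by fun_prop)) 0 1).const_mul _
  rw [intervalIntegral.integral_sub (intervalIntegrable_const.sub hA_int)
      ((continuous_arcsin.intervalIntegrable 0 1).const_mul 2),
    intervalIntegral.integral_sub intervalIntegrable_const hA_int,
    intervalIntegral.integral_const_mul, intervalIntegral.integral_const_mul,
    intervalIntegral.integral_const, hA, integral_arcsin_zero_one]
  field_simp
  ring
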